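/- For every k ≥ 1, the lengths of consecutive words of the Kolakoski fan satisfy (6/5)·|w_k| ≤ |w_{k+1}| ≤ (9/5)·|w_k|. -/
import Mathlib


/-- Expansion step of the Kolakoski fan: the `i`-th run of `expand w` has length
equal to the `i`-th letter of `w`, the runs alternating between blocks of `1`s
and blocks of `2`s, starting with a block of `1`s. -/
def expand (w : List ℕ) : List ℕ :=
  (List.range w.length).flatMap fun i =>
    List.replicate (w.getD i 0) (if i % 2 = 0 then 1 else 2)

/-- The Kolakoski fan: `fan 0 = 122` and `fan (k+1) = expand (fan k)`
(so `fan 1 = 12211`). -/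
def fan : ℕ → List ℕ
  | 0 => [1, 2, 2]
  | k + 1 => expand (fan k)

/-- Recursive version of `expand`, with a parity flag: `true` means the current
block consists of `1`s. -/
def expAux : Bool → List ℕ → List ℕ
  | _, [] => []
  | b, x :: xs => List.replicate x (if b then 1 else 2) ++ expAux (!b) xs

lemma expAux_eq (w : List ℕ) : ∀ j : ℕ,
    ((List.range w.length).flatMap fun i =>
      List.replicate (w.getD i 0) (if (i + j) % 2 = 0 then 1 else 2))
    = expAux (decide (j % 2 = 0)) w := by
  induction w with
  | nil => intro j; simp [expAux]
  | cons x xs ih =>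
    intro j
    rw [List.length_cons, List.range_succ_eq_map, List.flatMap_cons,
      List.flatMap_map]
    have h2 := ih (j + 1)
    have hfun : (fun i => List.replicate ((x :: xs).getD i 0)
        (if (i + j) % 2 = 0 then 1 else 2)) ∘ Nat.succ
        = fun i => List.replicate (xs.getD i 0) (if (i + (j + 1)) % 2 = 0 then 1 else 2) := by
      funext i
      simp only [Function.comp_apply, List.getD_cons_succ, Nat.succ_eq_add_one]
      have : i + 1 + j = i + (j + 1) := by omega
      rw [this]
    simp only [Nat.succ_add, Nat.add_succ, List.getD_cons_succ] at h2 ⊢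
    rw [h2]
    rcases Nat.even_or_odd j with hj | hj
    · have h1 : j % 2 = 0 := Nat.even_iff.mp hj
      have h2' : (j + 1) % 2 = 1 := by omega
      simp [expAux, h1, h2', List.getD_cons_zero, Nat.zero_add]
    · have h1 : j % 2 = 1 := Nat.odd_iff.mp hj
      have h2' : (j + 1) % 2 = 0 := by omega
      simp [expAux, h1, h2', List.getD_cons_zero, Nat.zero_add]

lemma expand_eq (w : List ℕ) : expand w = expAux true w := by
  have := expAux_eq w 0
  simpa [expand] using this

lemma length_expAux (b : Bool) (w : List ℕ) : (expAux b w).length = w.sum := by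
  induction w generalizing b with
  | nil => simp [expAux]
  | cons x xs ih => simp [expAux, ih]

lemma mem_expAux {b : Bool} {w : List ℕ} {y : ℕ} (h : y ∈ expAux b w) :
    y = 1 ∨ y = 2 := by
  induction w generalizing b with
  | nil => simp [expAux] at h
  | cons x xs ih =>
    simp only [expAux, List.mem_append] at h
    rcases h with h | h
    · rcases List.eq_of_mem_replicate h with rfl
      cases b <;> simp
    · exact ih h

lemma count_expAux_cons_cons (x y : ℕ) (xs : List ℕ) :
    (expAux true (x :: y :: xs)).count 1 = x + (expAux true xs).count 1 ∧
    (expAux true (x :: y :: xs)).count 2 = y + (expAux true xs).count 2 := by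
  simp [expAux, List.count_append, List.count_replicate]

/-- Key combinatorial bounds on the counts of `1`s and `2`s in `expAux true w`,
when all letters of `w` lie in `{1, 2}`. -/
lemma counts_bound : ∀ (w : List ℕ), (∀ y ∈ w, y = 1 ∨ y = 2) →
    (expAux true w).count 2 ≤ 2 * (expAux true w).count 1 ∧
    (expAux true w).count 1 ≤ 2 * (expAux true w).count 2 + 2
  | [], _ => by simp [expAux]
  | [x], h => by
    have hx := h x (by simp)
    simp only [expAux, List.count_append, List.count_replicate, List.count_nil]
    rcases hx with rfl | rfl <;> simp
  | x :: y :: xs, h => by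
    have hx := h x (by simp)
    have hy := h y (by simp)
    have ih := counts_bound xs (fun z hz => h z (by simp [hz]))
    obtain ⟨h1, h2⟩ := count_expAux_cons_cons x y xs
    rw [h1, h2]
    have hx1 : 1 ≤ x := by rcases hx with rfl | rfl <;> omega
    have hx2 : x ≤ 2 := by rcases hx with rfl | rfl <;> omega
    have hy1 : 1 ≤ y := by rcases hy with rfl | rfl <;> omega
    have hy2 : y ≤ 2 := by rcases hy with rfl | rfl <;> omega
    omega

lemma count_two_pos {w : List ℕ} (hw : 2 ≤ w.length)
    (h : ∀ y ∈ w, y = 1 ∨ y = 2) : 1 ≤ (expAux true w).count 2 := by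
  match w with
  | x :: y :: xs =>
    obtain ⟨_, h2⟩ := count_expAux_cons_cons x y xs
    have hy := h y (by simp)
    rw [h2]
    rcases hy with rfl | rfl <;> omega

lemma fan_mem (k : ℕ) : ∀ y ∈ fan k, y = 1 ∨ y = 2 := by
  cases k with
  | zero => intro y hy; simp [fan] at hy; omega
  | succ n =>
    intro y hy
    rw [fan, expand_eq] at hy
    exact mem_expAux hy

lemma sum_eq_counts {w : List ℕ} (h : ∀ y ∈ w, y = 1 ∨ y = 2) :
    w.sum = w.count 1 + 2 * w.count 2 ∧ w.length = w.count 1 + w.count 2 := by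
  induction w with
  | nil => simp
  | cons x xs ih =>
    have hx := h x (by simp)
    obtain ⟨i1, i2⟩ := ih (fun z hz => h z (by simp [hz]))
    rcases hx with rfl | rfl <;>
      simp [List.count_cons, i1, i2] <;> omega

lemma three_le_length_fan (k : ℕ) : 3 ≤ (fan k).length := by
  induction k with
  | zero => simp [fan]
  | succ n ih =>
    obtain ⟨hs, hl⟩ := sum_eq_counts (fan_mem n)
    have h : (fan (n + 1)).length = (fan n).sum := by
      rw [fan, expand_eq, length_expAux]
    omega

/-- For every `k ≥ 1`, consecutive words of the Kolakoski fan
satisfy `(6/5)·|w_k| ≤ |w_{k+1}| ≤ (9/5)·|w_k|`. -/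
theorem fan_length_ratio (k : ℕ) (hk : 1 ≤ k) :
    6 * (fan k).length ≤ 5 * (fan (k + 1)).length ∧
    5 * (fan (k + 1)).length ≤ 9 * (fan k).length := by
  obtain ⟨m, rfl⟩ : ∃ m, k = m + 1 := ⟨k - 1, by omega⟩
  -- letters of fan m are in {1,2}
  have hmem := fan_mem m
  have hmemk := fan_mem (m + 1)
  -- fan (m+1) = expAux true (fan m)
  have hfe : fan (m + 1) = expAux true (fan m) := by rw [fan, expand_eq]
  -- length of fan (m+2) = sum of fan (m+1)
  have hlen2 : (fan (m + 1 + 1)).length = (fan (m + 1)).sum := by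
    rw [fan, expand_eq, length_expAux]
  obtain ⟨hsum, hlen⟩ := sum_eq_counts hmemk
  -- counts bounds
  have hcb := counts_bound (fan m) hmem
  rw [← hfe] at hcb
  -- fan m has length ≥ 2
  have hlm : 3 ≤ (fan m).length := three_le_length_fan m
  have hc2 : 1 ≤ (fan (m + 1)).count 2 := by
    rw [hfe]
    exact count_two_pos (by omega) hmem
  omega
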